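/- arXiv:1804.02999 — 2 statements merged into one kernel-verified Lean document; each statement's English description precedes it below -/
import Mathlib

section
/- Let $G$ be a perfect group, $d\in\mathbb{N}$, and $N$ a normal subgroup of $G$ such that $\gamma_d(N)$ strictly contains $[G,{}^dN]$. Then $S=\Gamma_1(G,N)$ is a subgroup of $G^{\mathcal{P}([d])}\cong G^{2^d}$ whose projection to each coordinate is surjective, and $\gamma_d(S)$ strictly contains $\gamma_{d+1}(S)$; in particular $S/\gamma_{d+1}(S)$ is nilpotent of class exactly $d$. -/
/-- The homomorphism `Δ_A : G → G^(𝒫[d])`, where `Δ_A(u)(B) = u` if `A ⊆ B` and `1`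
otherwise. Coordinates of the direct power are indexed by `Finset (Fin d)`. -/
def Delta {G : Type*} [Group G] (d : ℕ) (A : Finset (Fin d)) :
    G →* (Finset (Fin d) → G) where
  toFun u := fun B => if A ⊆ B then u else 1
  map_one' := by funext B; simp
  map_mul' u v := by
    funext B
    by_cases h : A ⊆ B <;> simp [Pi.mul_apply, h]

/-- The left-normed iterated commutator subgroup `[G, ᵐN]`:
`[G, ⁰N] = G` (i.e. `⊤`) and `[G, ᵐ⁺¹N] = [[G, ᵐN], N]`. -/
def iterComm {G : Type*} [Group G] (N : Subgroup G) : ℕ → Subgroup G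
  | 0 => ⊤
  | m + 1 => ⁅iterComm N m, N⁆

/-- The lower central series of a subgroup `N`, as subgroups of the ambient group:
`γ₁(N) = N` is `gammaN N 0`, and `γ_{l+1}(N) = [γ_l(N), N]` is `gammaN N l`. -/
def gammaN {G : Type*} [Group G] (N : Subgroup G) : ℕ → Subgroup G
  | 0 => N
  | l + 1 => ⁅gammaN N l, N⁆

/-- The subgroup `Γ_k(G,N)` of `G^(𝒫[d])`, generated by the `Δ_A([G, ^{|A|}N])` with
`|A| < k` together with the `Δ_A(γ_{|A|}(N))` with `|A| ≥ k`. -/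
def GammaSub {G : Type*} [Group G] (d : ℕ) (N : Subgroup G) (k : ℕ) :
    Subgroup (Finset (Fin d) → G) :=
  ⨆ A : Finset (Fin d),
    if A.card < k then (iterComm N A.card).map (Delta d A)
    else (gammaN N (A.card - 1)).map (Delta d A)

/-
Surjectivity is witnessed by the diagonal `Δ_∅(G) ≤ S`. For the strict inclusion take
`u ∈ γ_d(N) \ [G, ᵈN]`. Writing `Δ_A(⁅w, n⁆) = ⁅Δ_{A \ a}(w), Δ_{a}(n)⁆` shows `Δ_[d](u) ∈ γ_d(S)`.
On the other hand the `Γ_k = Γ_k(G,N)` satisfy `⁅Γ_k, Γ_1⁆ ≤ Γ_{k+1}` (three subgroups lemma), so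
`γ_{d+1}(S) ≤ Γ_{d+1}`, the subgroup generated by the `Δ_A([G, ^{|A|}N])`. As these factors satisfy
`⁅[G, ^{|A|}N], [G, ^{|B|}N]⁆ ≤ [G, ^{|A ∪ B|}N]`, for every direction `i` an element `s` of such a
subgroup differs from its pullback along `B ↦ B \ {i}` by an element generated by the `Δ_A` with
`i ∈ A`. If `s` is supported on the top coordinate its pullbacks are trivial, so peeling off all
directions leaves `s ∈ Δ_[d]([G, ᵈN])`; hence `Δ_[d](u) ∉ γ_{d+1}(S)`.
-/

open scoped commutatorElement

namespace Subgroup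

variable {G : Type*} [Group G]

theorem commutator_commutator_le_of_rotate {H₁ H₂ H₃ L : Subgroup G} [L.Normal]
    (h1 : ⁅⁅H₂, H₃⁆, H₁⁆ ≤ L) (h2 : ⁅⁅H₃, H₁⁆, H₂⁆ ≤ L) : ⁅⁅H₁, H₂⁆, H₃⁆ ≤ L := by
  have hquot : ∀ X Y Z : Subgroup G, ⁅⁅X, Y⁆, Z⁆ ≤ L ↔
      ⁅⁅X.map (QuotientGroup.mk' L), Y.map (QuotientGroup.mk' L)⁆,
        Z.map (QuotientGroup.mk' L)⁆ = ⊥ := by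
    intro X Y Z
    rw [← map_commutator, ← map_commutator, map_eq_bot_iff, QuotientGroup.ker_mk']
  rw [hquot] at h1 h2 ⊢
  exact commutator_commutator_eq_bot_of_rotate h1 h2

theorem commutator_self_le (H : Subgroup G) : ⁅H, H⁆ ≤ H :=
  le_normalizer_iff_commutator_le_right.mp le_normalizer

end Subgroup

section IterComm

variable {G : Type*} [Group G]

def iterCommFrom (M N : Subgroup G) : ℕ → Subgroup G
  | 0 => M
  | m + 1 => ⁅iterCommFrom M N m, N⁆

theorem iterComm_eq_iterCommFrom (N : Subgroup G) : iterComm N = iterCommFrom ⊤ N := by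
  funext m
  induction m with
  | zero => rfl
  | succ m ih => exact congrArg (⁅·, N⁆) ih

theorem gammaN_eq_iterCommFrom (N : Subgroup G) : gammaN N = iterCommFrom N N := by
  funext m
  induction m with
  | zero => rfl
  | succ m ih => exact congrArg (⁅·, N⁆) ih

theorem iterCommFrom_succ' (M N : Subgroup G) (m : ℕ) :
    iterCommFrom M N (m + 1) = iterCommFrom ⁅M, N⁆ N m := by
  induction m with
  | zero => rfl
  | succ m ih => exact congrArg (⁅·, N⁆) ih

theorem iterCommFrom_mono_left {M M' : Subgroup G} (N : Subgroup G) (h : M ≤ M') :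
    ∀ m, iterCommFrom M N m ≤ iterCommFrom M' N m
  | 0 => h
  | m + 1 => Subgroup.commutator_mono (iterCommFrom_mono_left N h m) le_rfl

theorem iterCommFrom_antitone {M N : Subgroup G} (h : ⁅M, N⁆ ≤ M) :
    Antitone (iterCommFrom M N) := by
  refine antitone_nat_of_succ_le fun m => ?_
  rw [iterCommFrom_succ']
  exact iterCommFrom_mono_left N h m

instance iterCommFrom_normal (M N : Subgroup G) [M.Normal] [N.Normal] :
    ∀ m, (iterCommFrom M N m).Normal
  | 0 => ‹_›
  | m + 1 => by
    have := iterCommFrom_normal M N m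
    exact Subgroup.commutator_normal _ _

theorem commutator_iterCommFrom_le (M N : Subgroup G) [M.Normal] [N.Normal] (b : ℕ) :
    ∀ a, ⁅iterCommFrom M N a, iterCommFrom N N b⁆ ≤ iterCommFrom M N (a + b + 1) := by
  induction b with
  | zero => intro a; rfl
  | succ b ih =>
    intro a
    change ⁅iterCommFrom M N a, ⁅iterCommFrom N N b, N⁆⁆ ≤ _
    rw [Subgroup.commutator_comm]
    refine Subgroup.commutator_commutator_le_of_rotate ?_ ?_
    · rw [Subgroup.commutator_comm N]
      calc _ ≤ iterCommFrom M N (a + 1 + b + 1) := ih (a + 1)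
        _ = _ := by congr 1; omega
    · exact Subgroup.commutator_mono (ih a) le_rfl

end IterComm

section LowerCentral

variable {G : Type*} [Group G] (N : Subgroup G)

theorem gammaN_antitone : Antitone (gammaN N) := by
  rw [gammaN_eq_iterCommFrom]
  exact iterCommFrom_antitone (Subgroup.commutator_self_le N)

theorem gammaN_le_iterComm (l : ℕ) : gammaN N l ≤ iterComm N l := by
  rw [gammaN_eq_iterCommFrom, iterComm_eq_iterCommFrom]
  exact iterCommFrom_mono_left N le_top l

theorem iterComm_antitone : Antitone (iterComm N) := by
  rw [iterComm_eq_iterCommFrom]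
  exact iterCommFrom_antitone (Subgroup.commutator_le_left _ _)

variable [N.Normal]

instance iterComm_normal (m : ℕ) : (iterComm N m).Normal := by
  rw [iterComm_eq_iterCommFrom]; infer_instance

instance gammaN_normal (l : ℕ) : (gammaN N l).Normal := by
  rw [gammaN_eq_iterCommFrom]; infer_instance

theorem iterComm_succ_le_gammaN (l : ℕ) : iterComm N (l + 1) ≤ gammaN N l := by
  rw [gammaN_eq_iterCommFrom, iterComm_eq_iterCommFrom, iterCommFrom_succ']
  exact iterCommFrom_mono_left N (Subgroup.commutator_le_right _ _) l

theorem commutator_iterComm_gammaN_le (a b : ℕ) :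
    ⁅iterComm N a, gammaN N b⁆ ≤ iterComm N (a + b + 1) := by
  rw [gammaN_eq_iterCommFrom, iterComm_eq_iterCommFrom]
  exact commutator_iterCommFrom_le ⊤ N b a

theorem commutator_gammaN_gammaN_le (a b : ℕ) :
    ⁅gammaN N a, gammaN N b⁆ ≤ gammaN N (a + b + 1) := by
  rw [gammaN_eq_iterCommFrom]
  exact commutator_iterCommFrom_le N N b a

theorem commutator_iterComm_iterComm_le (a b : ℕ) :
    ⁅iterComm N a, iterComm N b⁆ ≤ iterComm N (a + b) := by
  rcases b with _ | b
  · exact Subgroup.commutator_le_left _ _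
  · exact (Subgroup.commutator_mono le_rfl (iterComm_succ_le_gammaN N b)).trans
      (commutator_iterComm_gammaN_le N a b)

end LowerCentral

namespace Subgroup

variable {P : Type*} [Group P] {ι κ : Sort*}

theorem iSup_le_normalizer_iSup {S : ι → Subgroup P} {T : κ → Subgroup P}
    (h : ∀ i j, ∀ x ∈ S i, ∀ y ∈ T j, x * y * x⁻¹ ∈ ⨆ j, T j) :
    ⨆ i, S i ≤ normalizer ((⨆ j, T j : Subgroup P) : Set P) := by
  rw [le_normalizer_iff]
  intro x hx
  refine iSup_induction S (C := fun x => ∀ y ∈ ⨆ j, T j, x * y * x⁻¹ ∈ ⨆ j, T j) hx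
    (fun i x hx y hy => ?_) (by simp) (fun x₁ x₂ h₁ h₂ y hy => ?_)
  · refine iSup_induction T (C := fun y => x * y * x⁻¹ ∈ ⨆ j, T j) hy
      (fun j y hy => h i j x hx y hy) (by simp) (fun y₁ y₂ h₁ h₂ => ?_)
    simpa [mul_assoc] using mul_mem h₁ h₂
  · simpa [mul_assoc] using h₁ _ (h₂ y hy)

theorem commutatorElement_mem_of_mem_iSup {T : κ → Subgroup P} {K : Subgroup P}
    (hT : ⨆ j, T j ≤ normalizer K) {g : P} (h : ∀ j, ∀ y ∈ T j, ⁅g, y⁆ ∈ K)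
    {y : P} (hy : y ∈ ⨆ j, T j) : ⁅g, y⁆ ∈ K := by
  refine iSup_induction' T (C := fun y _ => ⁅g, y⁆ ∈ K) (fun j y hy => h j y hy) (by simp)
    (fun y₁ y₂ hy₁ _ h₁ h₂ => ?_) hy
  rw [commutatorElement_mul_right_eq_mul_conj, mul_assoc _ y₁, mul_assoc]
  exact mul_mem h₁ ((mem_normalizer_iff.mp (hT hy₁) _).mp h₂)

theorem commutator_iSup_le {S : ι → Subgroup P} {T : κ → Subgroup P} {K : Subgroup P}
    (hS : ⨆ i, S i ≤ normalizer K) (hT : ⨆ j, T j ≤ normalizer K)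
    (h : ∀ i j, ∀ x ∈ S i, ∀ y ∈ T j, ⁅x, y⁆ ∈ K) : ⁅⨆ i, S i, ⨆ j, T j⁆ ≤ K := by
  refine commutator_le.mpr fun x hx y hy => commutatorElement_mem_of_mem_iSup hT
    (fun j y' hy' => ?_) hy
  rw [← inv_mem_iff, commutatorElement_inv]
  exact commutatorElement_mem_of_mem_iSup hS
    (fun i x' hx' => by rw [← inv_mem_iff, commutatorElement_inv]; exact h i j x' hx' y' hy') hx

theorem inv_map_mul_mem_of_mem_iSup (φ : P →* P) {S : ι → Subgroup P} {K : Subgroup P}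
    (hφ : ∀ i, ∀ x ∈ S i, φ x ∈ normalizer K) (h : ∀ i, ∀ x ∈ S i, (φ x)⁻¹ * x ∈ K)
    {x : P} (hx : x ∈ ⨆ i, S i) : (φ x)⁻¹ * x ∈ K := by
  suffices φ x ∈ normalizer K ∧ (φ x)⁻¹ * x ∈ K from this.2
  refine iSup_induction S (C := fun x => φ x ∈ normalizer K ∧ (φ x)⁻¹ * x ∈ K) hx
    (fun i x hx => ⟨hφ i x hx, h i x hx⟩) (by simp) (fun x y ⟨hxn, hx⟩ ⟨hyn, hy⟩ => ?_)
  refine ⟨map_mul φ x y ▸ mul_mem hxn hyn, ?_⟩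
  have hconj := (mem_normalizer_iff.mp (inv_mem hyn) _).mp hx
  rw [inv_inv] at hconj
  rw [map_mul, mul_inv_rev]
  simpa [mul_assoc] using mul_mem hconj hy

end Subgroup

section Cube

variable {G : Type*} [Group G] {d : ℕ}

theorem card_union_bounds (A B : Finset (Fin d)) :
    A.card ≤ (A ∪ B).card ∧ B.card ≤ (A ∪ B).card ∧ (A ∪ B).card ≤ A.card + B.card :=
  ⟨Finset.card_le_card Finset.subset_union_left, Finset.card_le_card Finset.subset_union_right,
    Finset.card_union_le A B⟩

theorem Delta_apply (A B : Finset (Fin d)) (u : G) :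
    Delta d A u B = if A ⊆ B then u else 1 := rfl

theorem commutatorElement_Delta (A B : Finset (Fin d)) (u v : G) :
    ⁅Delta d A u, Delta d B v⁆ = Delta d (A ∪ B) ⁅u, v⁆ := by
  funext C
  simp only [commutatorElement_def, Pi.mul_apply, Pi.inv_apply, Delta_apply,
    Finset.union_subset_iff]
  by_cases hA : A ⊆ C <;> by_cases hB : B ⊆ C <;> simp [hA, hB]

theorem map_Delta_union_commutator_le (A B : Finset (Fin d)) (H K : Subgroup G) :
    ⁅H, K⁆.map (Delta d (A ∪ B)) ≤ ⁅H.map (Delta d A), K.map (Delta d B)⁆ := by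
  rw [Subgroup.map_le_iff_le_comap, Subgroup.commutator_le]
  intro h hh k hk
  rw [Subgroup.mem_comap, ← commutatorElement_Delta]
  exact Subgroup.commutator_mem_commutator (Subgroup.mem_map_of_mem _ hh)
    (Subgroup.mem_map_of_mem _ hk)

theorem Delta_conj (A B : Finset (Fin d)) (u v : G) :
    Delta d A u * Delta d B v * (Delta d A u)⁻¹ = Delta d (A ∪ B) ⁅u, v⁆ * Delta d B v := by
  rw [← commutatorElement_Delta, commutatorElement_def]
  group

def cubeSub (Y : Finset (Fin d) → Subgroup G) : Subgroup (Finset (Fin d) → G) :=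
  ⨆ A, (Y A).map (Delta d A)

theorem Delta_mem_cubeSub {Y : Finset (Fin d) → Subgroup G} (A : Finset (Fin d)) {x : G}
    (hx : x ∈ Y A) : Delta d A x ∈ cubeSub Y :=
  Subgroup.mem_iSup_of_mem A (Subgroup.mem_map_of_mem _ hx)

theorem cubeSub_mono {Y Z : Finset (Fin d) → Subgroup G} (h : ∀ A, Y A ≤ Z A) :
    cubeSub Y ≤ cubeSub Z :=
  iSup_mono fun A => Subgroup.map_mono (h A)

theorem cubeSub_le_normalizer {Y Z : Finset (Fin d) → Subgroup G}
    (h : ∀ A B, ⁅Y A, Z B⁆ ≤ Z (A ∪ B)) : cubeSub Y ≤ Subgroup.normalizer (cubeSub Z : Set _) := by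
  refine Subgroup.iSup_le_normalizer_iSup ?_
  rintro A B _ ⟨x, hx, rfl⟩ _ ⟨y, hy, rfl⟩
  rw [Delta_conj]
  exact mul_mem (Delta_mem_cubeSub _ (h A B (Subgroup.commutator_mem_commutator hx hy)))
    (Delta_mem_cubeSub _ hy)

theorem commutator_cubeSub_le {Y Y' Z : Finset (Fin d) → Subgroup G}
    (hY : cubeSub Y ≤ Subgroup.normalizer (cubeSub Z : Set _))
    (hY' : cubeSub Y' ≤ Subgroup.normalizer (cubeSub Z : Set _))
    (h : ∀ A B, ⁅Y A, Y' B⁆ ≤ Z (A ∪ B)) : ⁅cubeSub Y, cubeSub Y'⁆ ≤ cubeSub Z := by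
  refine Subgroup.commutator_iSup_le hY hY' ?_
  rintro A B _ ⟨x, hx, rfl⟩ _ ⟨y, hy, rfl⟩
  rw [commutatorElement_Delta]
  exact Delta_mem_cubeSub _ (h A B (Subgroup.commutator_mem_commutator hx hy))

def restrictAbove (T : Finset (Fin d)) (Y : Finset (Fin d) → Subgroup G) :
    Finset (Fin d) → Subgroup G :=
  fun A => if T ⊆ A then Y A else ⊥

theorem restrictAbove_empty (Y : Finset (Fin d) → Subgroup G) : restrictAbove ∅ Y = Y :=
  funext fun A => if_pos (Finset.empty_subset A)

theorem restrictAbove_le (T : Finset (Fin d)) (Y : Finset (Fin d) → Subgroup G)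
    (A : Finset (Fin d)) : restrictAbove T Y A ≤ Y A := by
  unfold restrictAbove; split_ifs <;> simp

def eraseHom (i : Fin d) : (Finset (Fin d) → G) →* (Finset (Fin d) → G) :=
  MonoidHom.pi fun B => Pi.evalMonoidHom (fun _ => G) (B.erase i)

theorem eraseHom_Delta (i : Fin d) (A : Finset (Fin d)) (u : G) :
    eraseHom i (Delta d A u) = if i ∈ A then 1 else Delta d A u := by
  funext B
  by_cases hi : i ∈ A <;> simp [eraseHom, Delta_apply, Finset.subset_erase, hi]

variable {Y : Finset (Fin d) → Subgroup G} (hY : ∀ A B, ⁅Y A, Y B⁆ ≤ Y (A ∪ B))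
include hY

theorem mem_cubeSub_restrictAbove_insert {T : Finset (Fin d)} (i : Fin d)
    {s : Finset (Fin d) → G} (hs : s ∈ cubeSub (restrictAbove T Y))
    (hs₁ : ∀ B, i ∉ B → s B = 1) : s ∈ cubeSub (restrictAbove (insert i T) Y) := by
  have hnorm : cubeSub (restrictAbove T Y) ≤
      Subgroup.normalizer (cubeSub (restrictAbove (insert i T) Y) : Set _) := by
    refine cubeSub_le_normalizer fun A B => ?_
    by_cases hB : insert i T ⊆ B
    · have hAB : insert i T ⊆ A ∪ B := hB.trans Finset.subset_union_right
      simp only [restrictAbove, hB, hAB, if_true]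
      exact (Subgroup.commutator_mono (restrictAbove_le T Y A) le_rfl).trans (hY A B)
    · simp [restrictAbove, hB]
  have hdiff := Subgroup.inv_map_mul_mem_of_mem_iSup (eraseHom i)
    (K := cubeSub (restrictAbove (insert i T) Y)) ?_ ?_ hs
  · have hρ : eraseHom i s = 1 := funext fun B => hs₁ _ (Finset.notMem_erase i B)
    rwa [hρ, inv_one, one_mul] at hdiff
  · rintro A _ ⟨x, hx, rfl⟩
    rw [eraseHom_Delta]
    split_ifs
    · exact one_mem _
    · exact hnorm (Delta_mem_cubeSub A hx)
  · rintro A _ ⟨x, hx, rfl⟩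
    rw [eraseHom_Delta]
    split_ifs with hi
    · rw [inv_one, one_mul]
      refine Delta_mem_cubeSub A ?_
      by_cases hT : T ⊆ A
      · simpa [restrictAbove, hT, Finset.insert_subset_iff, hi] using hx
      · simp_all [restrictAbove]
    · simp

theorem mem_of_mem_cubeSub_of_eq_one {s : Finset (Fin d) → G} (hs : s ∈ cubeSub Y)
    (hs₁ : ∀ B, B ≠ Finset.univ → s B = 1) : s Finset.univ ∈ Y Finset.univ := by
  have hT : ∀ T, s ∈ cubeSub (restrictAbove T Y) := by
    intro T
    induction T using Finset.induction_on with
    | empty => rwa [restrictAbove_empty]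
    | insert i T _ ih =>
      exact mem_cubeSub_restrictAbove_insert hY i ih
        fun B hi => hs₁ B fun hB => hi (hB ▸ Finset.mem_univ i)
  refine Subgroup.iSup_induction _ (C := fun s => s Finset.univ ∈ Y Finset.univ)
    (hT Finset.univ) ?_ (one_mem _) (fun _ _ => mul_mem)
  rintro A _ ⟨x, hx, rfl⟩
  by_cases hA : A = Finset.univ
  · subst hA
    simpa [restrictAbove, Delta_apply] using hx
  · simp_all [restrictAbove, Finset.univ_subset_iff]

end Cube

section GammaFiltration

variable {G : Type*} [Group G] (N : Subgroup G) {d : ℕ}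

def gammaComp (k a : ℕ) : Subgroup G :=
  if a < k then iterComm N a else gammaN N (a - 1)

theorem GammaSub_eq_cubeSub (k : ℕ) :
    GammaSub d N k = cubeSub (fun A : Finset (Fin d) => gammaComp N k A.card) := by
  refine iSup_congr fun A => ?_
  dsimp only [gammaComp]
  split_ifs <;> rfl

theorem gammaComp_of_lt {k a : ℕ} (h : a < k) : gammaComp N k a = iterComm N a := if_pos h

theorem gammaComp_of_le {k a : ℕ} (h : k ≤ a) : gammaComp N k a = gammaN N (a - 1) :=
  if_neg (not_lt.mpr h)

theorem gammaN_le_gammaComp {j k c : ℕ} (hc : c ≤ j ∨ k ≤ c ∧ c ≤ j + 1) :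
    gammaN N j ≤ gammaComp N k c := by
  rcases lt_or_ge c k with hck | hck
  · rw [gammaComp_of_lt N hck]
    exact (gammaN_antitone N (by omega)).trans (gammaN_le_iterComm N c)
  · rw [gammaComp_of_le N hck]
    exact gammaN_antitone N (by omega)

theorem GammaSub_succ_eq : GammaSub d N (d + 1) = cubeSub (fun A => iterComm N A.card) := by
  rw [GammaSub_eq_cubeSub]
  congr 1
  funext A
  exact gammaComp_of_lt N (Nat.lt_succ_of_le (card_finset_fin_le A))

theorem map_Delta_gammaN_le (j : ℕ) :
    ∀ A : Finset (Fin d), A.card = j + 1 →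
      (gammaN N j).map (Delta d A) ≤ gammaN (GammaSub d N 1) j := by
  have hsingle (a : Fin d) : N.map (Delta d {a}) ≤ GammaSub d N 1 := by
    rintro _ ⟨x, hx, rfl⟩
    rw [GammaSub_eq_cubeSub]
    exact Delta_mem_cubeSub {a} (by rw [Finset.card_singleton, gammaComp_of_le N le_rfl]; exact hx)
  induction j with
  | zero =>
    intro A hA
    obtain ⟨a, rfl⟩ := Finset.card_eq_one.mp hA
    exact hsingle a
  | succ j ih =>
    intro A hA
    obtain ⟨a, ha⟩ := Finset.card_pos.mp (by omega : 0 < A.card)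
    have hA' : A.erase a ∪ {a} = A := by
      rw [Finset.union_comm, ← Finset.insert_eq, Finset.insert_erase ha]
    rw [← hA']
    exact (map_Delta_union_commutator_le _ _ _ _).trans (Subgroup.commutator_mono
      (ih _ (by rw [Finset.card_erase_of_mem ha, hA]; rfl)) (hsingle a))

variable [N.Normal]

theorem commutator_iterComm_card_le (A B : Finset (Fin d)) :
    ⁅iterComm N A.card, iterComm N B.card⁆ ≤ iterComm N (A ∪ B).card :=
  (commutator_iterComm_iterComm_le N _ _).trans (iterComm_antitone N (Finset.card_union_le A B))

theorem iterComm_le_gammaComp {k : ℕ} (hk : 0 < k) (c : ℕ) : iterComm N c ≤ gammaComp N k c := by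
  rcases lt_or_ge c k with hc | hc
  · rw [gammaComp_of_lt N hc]
  · rw [gammaComp_of_le N hc]
    obtain ⟨c, rfl⟩ := Nat.exists_eq_add_one_of_ne_zero (by omega : c ≠ 0)
    exact iterComm_succ_le_gammaN N c

theorem gammaComp_antitone {k k' : ℕ} (hk' : 0 < k') (h : k' ≤ k) (a : ℕ) :
    gammaComp N k a ≤ gammaComp N k' a := by
  rcases lt_or_ge a k with ha | ha
  · rw [gammaComp_of_lt N ha]
    exact iterComm_le_gammaComp N hk' a
  · rw [gammaComp_of_le N ha]
    exact gammaN_le_gammaComp N (Or.inr ⟨h.trans ha, by omega⟩)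

theorem commutator_gammaComp_le {k a b c : ℕ} (hk : 0 < k) (ha : a ≤ c) (hb : b ≤ c)
    (hc : c ≤ a + b) : ⁅gammaComp N 1 b, gammaComp N k a⁆ ≤ gammaComp N (k + 1) c := by
  rcases b with _ | b
  · obtain rfl : c = a := by omega
    rw [gammaComp_of_lt N one_pos, Subgroup.commutator_comm]
    refine le_trans ?_ (iterComm_le_gammaComp N k.succ_pos c)
    rcases lt_or_ge c k with hck | hck
    · rw [gammaComp_of_lt N hck]
      exact Subgroup.commutator_le_left _ _
    · rw [gammaComp_of_le N hck, Subgroup.commutator_comm]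
      obtain ⟨c, rfl⟩ := Nat.exists_eq_add_one_of_ne_zero (by omega : c ≠ 0)
      simpa using commutator_iterComm_gammaN_le N 0 c
  · rw [gammaComp_of_le N (by omega : 1 ≤ b + 1), Nat.add_sub_cancel, Subgroup.commutator_comm]
    rcases lt_or_ge a k with hak | hak
    · rw [gammaComp_of_lt N hak]
      exact (commutator_iterComm_gammaN_le N a b).trans
        ((iterComm_antitone N (by omega)).trans (iterComm_le_gammaComp N k.succ_pos c))
    · rw [gammaComp_of_le N hak]
      exact (commutator_gammaN_gammaN_le N _ _).trans (gammaN_le_gammaComp N (by omega))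

theorem GammaSub_one_le_normalizer {k : ℕ} (hk : 0 < k) :
    GammaSub d N 1 ≤ Subgroup.normalizer (GammaSub d N k : Set _) := by
  rw [GammaSub_eq_cubeSub, GammaSub_eq_cubeSub]
  refine cubeSub_le_normalizer fun A B => ?_
  obtain ⟨hA, hB, hAB⟩ := card_union_bounds A B
  exact (commutator_gammaComp_le N hk hB hA (by omega)).trans
    (gammaComp_antitone N hk k.le_succ _)

theorem commutator_GammaSub_le {k : ℕ} (hk : 0 < k) :
    ⁅GammaSub d N k, GammaSub d N 1⁆ ≤ GammaSub d N (k + 1) := by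
  have hnorm := GammaSub_one_le_normalizer (d := d) N k.succ_pos
  have hle : GammaSub d N k ≤ GammaSub d N 1 := by
    rw [GammaSub_eq_cubeSub, GammaSub_eq_cubeSub]
    exact cubeSub_mono fun A => gammaComp_antitone N one_pos hk _
  rw [GammaSub_eq_cubeSub, GammaSub_eq_cubeSub, GammaSub_eq_cubeSub] at *
  refine commutator_cubeSub_le (hle.trans hnorm) hnorm fun A B => ?_
  obtain ⟨hA, hB, hAB⟩ := card_union_bounds A B
  rw [Subgroup.commutator_comm]
  exact commutator_gammaComp_le N hk hA hB hAB

theorem gammaN_GammaSub_one_le (j : ℕ) : gammaN (GammaSub d N 1) j ≤ GammaSub d N (j + 1) := by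
  induction j with
  | zero => rfl
  | succ j ih =>
    exact (Subgroup.commutator_mono ih le_rfl).trans (commutator_GammaSub_le N j.succ_pos)

end GammaFiltration

theorem GammaSub_one_subdirect_and_gamma_lt_general
    {G : Type*} [Group G]
    {d : ℕ} (hd : 0 < d) (N : Subgroup G) [N.Normal]
    (hN : iterComm N d < gammaN N (d - 1)) :
    (∀ B : Finset (Fin d), Function.Surjective
      (fun s : ↥(GammaSub d N 1) => (s : Finset (Fin d) → G) B)) ∧
    gammaN (GammaSub d N 1) d < gammaN (GammaSub d N 1) (d - 1) := by
  obtain ⟨e, rfl⟩ := Nat.exists_eq_add_one_of_ne_zero hd.ne'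
  have hdiag (g : G) : Delta (e + 1) ∅ g ∈ GammaSub (e + 1) N 1 := by
    rw [GammaSub_eq_cubeSub]
    exact Delta_mem_cubeSub ∅ (by rw [Finset.card_empty, gammaComp_of_lt N one_pos]; trivial)
  refine ⟨fun B g => ⟨⟨_, hdiag g⟩, by simp [Delta_apply]⟩, ?_⟩
  rw [Nat.add_sub_cancel]
  refine lt_of_le_of_ne (gammaN_antitone _ e.le_succ) fun heq => ?_
  obtain ⟨u, hu, hu'⟩ := SetLike.exists_of_lt hN
  have htop : Delta (e + 1) Finset.univ u ∈ gammaN (GammaSub (e + 1) N 1) e :=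
    map_Delta_gammaN_le N e _ (by simp) (Subgroup.mem_map_of_mem _ hu)
  have hcube : Delta (e + 1) Finset.univ u ∈ cubeSub (fun A => iterComm N A.card) := by
    rw [← GammaSub_succ_eq]
    exact gammaN_GammaSub_one_le N (e + 1) (heq ▸ htop)
  refine hu' ?_
  simpa [Delta_apply] using mem_of_mem_cubeSub_of_eq_one (commutator_iterComm_card_le N) hcube
    fun B hB => if_neg (mt Finset.univ_subset_iff.mp hB)

/-- **Theorem 2.** Let `G` be perfect, `d ≥ 1`, and `N ⊴ G` with `γ_d(N) > [G, ᵈN]`.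
Then `S = Γ₁(G,N)` is a subdirect subgroup of `G^(𝒫[d]) ≅ G^(2^d)` and
`γ_{d+1}(S) < γ_d(S)`, so `S/γ_{d+1}(S)` is nilpotent of class exactly `d`.
Here `γ_k(S)` is `gammaN S (k-1)`. -/
theorem GammaSub_one_subdirect_and_gamma_lt
    {G : Type*} [Group G] (hperf : ⁅(⊤ : Subgroup G), (⊤ : Subgroup G)⁆ = ⊤)
    {d : ℕ} (hd : 0 < d) (N : Subgroup G) [N.Normal]
    (hN : iterComm N d < gammaN N (d - 1)) :
    (∀ B : Finset (Fin d), Function.Surjective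
      (fun s : ↥(GammaSub d N 1) => (s : Finset (Fin d) → G) B)) ∧
    gammaN (GammaSub d N 1) d < gammaN (GammaSub d N 1) (d - 1) :=
  GammaSub_one_subdirect_and_gamma_lt_general hd N hN
end

section
/- With $\mathbb{F}=\mathbb{F}_4$ and $H$, $M$, $N$, $G=HM$ the subgroups of $\mathrm{SL}_6(\mathbb{F})$ defined below, $N$ is a normal subgroup of $G$. -/
/-- The group `SL₆(F)`, with rows and columns indexed by `Fin 3 × Fin 2`, so that
its elements can be viewed as `3 × 3` block matrices with `2 × 2` blocks. -/
abbrev SL6 (F : Type*) [Field F] [Fintype F] : Type _ :=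
  Matrix.SpecialLinearGroup (Fin 3 × Fin 2) F

/-- Assemble a `3 × 3` array of `2 × 2` blocks into a `6 × 6` matrix. -/
def blk3 {F : Type*} [Field F] (f : Fin 3 → Fin 3 → Matrix (Fin 2) (Fin 2) F) :
    Matrix (Fin 3 × Fin 2) (Fin 3 × Fin 2) F :=
  Matrix.of fun p q => f p.1 q.1 p.2 q.2

/-- The subgroup `H` of `SL₆(F)`: block diagonal matrices `diag(A, A, A)` with
`A ∈ SL₂(F)`. -/
def Hset (F : Type*) [Field F] [Fintype F] : Set (SL6 F) :=
  {X | ∃ A : Matrix.SpecialLinearGroup (Fin 2) F,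
    (X : Matrix (Fin 3 × Fin 2) (Fin 3 × Fin 2) F) =
      blk3 ![![(A : Matrix (Fin 2) (Fin 2) F), 0, 0],
              ![0, (A : Matrix (Fin 2) (Fin 2) F), 0],
              ![0, 0, (A : Matrix (Fin 2) (Fin 2) F)]]}

/-- The subgroup `M` of `SL₆(F)`: block upper unitriangular matrices with blocks
`B` (position (1,2)), `C` (position (2,3)) of trace `0` and an arbitrary block `D`
(position (1,3)). -/
def Mset (F : Type*) [Field F] [Fintype F] : Set (SL6 F) :=
  {X | ∃ B C D : Matrix (Fin 2) (Fin 2) F, B.trace = 0 ∧ C.trace = 0 ∧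
    (X : Matrix (Fin 3 × Fin 2) (Fin 3 × Fin 2) F) =
      blk3 ![![1, B, D], ![0, 1, C], ![0, 0, 1]]}

/-- The subgroup `N` of `SL₆(F)`: elements of `M` whose blocks in positions (1,2)
and (2,3) are scalar matrices `b•I` and `c•I`. -/
def Nset (F : Type*) [Field F] [Fintype F] : Set (SL6 F) :=
  {X | ∃ (b c : F) (D : Matrix (Fin 2) (Fin 2) F),
    (X : Matrix (Fin 3 × Fin 2) (Fin 3 × Fin 2) F) =
      blk3 ![![1, b • 1, D], ![0, 1, c • 1], ![0, 0, 1]]}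

/-- The group `G = HM`, i.e. the subgroup of `SL₆(F)` generated by `H ∪ M`. -/
def Gsub (F : Type*) [Field F] [Fintype F] : Subgroup (SL6 F) :=
  Subgroup.closure (Hset F ∪ Mset F)

/-!
The blocks in positions (1,2) and (2,3) of a product of block unitriangular matrices are the sums
of those of the factors, so conjugating by an element of `M` (indeed by any block unitriangular
matrix) does not change them. Conjugating by `diag(A, A, A)` conjugates every block by `A`,
which fixes the scalar blocks `b • 1` and `c • 1`. Hence `N` is a subgroup normalized by the generators `H ∪ M` of `G`; as `H` and `M` are closed
under inverses, `N` is normalized by all of `G`.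
-/

section

variable {F : Type*} [Field F]

theorem blk3_mul (f g : Fin 3 → Fin 3 → Matrix (Fin 2) (Fin 2) F) :
    blk3 f * blk3 g = blk3 fun i j => ∑ k, f i k * g k j := by
  ext ⟨i, a⟩ ⟨j, b⟩
  simp [blk3, Matrix.mul_apply, Fintype.sum_prod_type, Matrix.sum_apply]

abbrev blockUnitri (B C D : Matrix (Fin 2) (Fin 2) F) :
    Matrix (Fin 3 × Fin 2) (Fin 3 × Fin 2) F :=
  blk3 ![![1, B, D], ![0, 1, C], ![0, 0, 1]]

abbrev blockDiag3 (A : Matrix (Fin 2) (Fin 2) F) : Matrix (Fin 3 × Fin 2) (Fin 3 × Fin 2) F :=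
  blk3 ![![A, 0, 0], ![0, A, 0], ![0, 0, A]]

theorem blockUnitri_zero : blockUnitri (0 : Matrix (Fin 2) (Fin 2) F) 0 0 = 1 := by
  ext ⟨i, a⟩ ⟨j, b⟩
  fin_cases i <;> fin_cases j <;> fin_cases a <;> fin_cases b <;> rfl

theorem blockUnitri_mul (B C D B' C' D' : Matrix (Fin 2) (Fin 2) F) :
    blockUnitri B C D * blockUnitri B' C' D' = blockUnitri (B + B') (C + C') (D + D' + B * C') := by
  rw [blk3_mul]
  congr 1
  funext i j
  fin_cases i <;> fin_cases j <;> simp [Fin.sum_univ_three] <;> abel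

theorem blockUnitri_mul_blockUnitri_neg (B C D : Matrix (Fin 2) (Fin 2) F) :
    blockUnitri B C D * blockUnitri (-B) (-C) (B * C - D) = 1 := by
  rw [blockUnitri_mul, ← blockUnitri_zero]
  congr 1
  · exact add_neg_cancel B
  · exact add_neg_cancel C
  · noncomm_ring

theorem blockDiag3_mul (A A' : Matrix (Fin 2) (Fin 2) F) :
    blockDiag3 A * blockDiag3 A' = blockDiag3 (A * A') := by
  rw [blk3_mul]
  congr 1
  funext i j
  fin_cases i <;> fin_cases j <;> simp [Fin.sum_univ_three]

theorem blockDiag3_mul_blockUnitri_mul_blockDiag3 {A A' : Matrix (Fin 2) (Fin 2) F}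
    (h : A * A' = 1) (B C D : Matrix (Fin 2) (Fin 2) F) :
    blockDiag3 A * blockUnitri B C D * blockDiag3 A' =
      blockUnitri (A * B * A') (A * C * A') (A * D * A') := by
  rw [blk3_mul, blk3_mul]
  congr 1
  funext i j
  fin_cases i <;> fin_cases j <;> simp [Fin.sum_univ_three, h]

namespace Matrix.SpecialLinearGroup

variable {n R : Type*} [DecidableEq n] [Fintype n] [CommRing R]

theorem coe_inv_eq_of_mul_eq_one (x : SpecialLinearGroup n R) {X : Matrix n n R}
    (h : (x : Matrix n n R) * X = 1) : ((x⁻¹ : SpecialLinearGroup n R) : Matrix n n R) = X :=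
  left_inv_eq_right_inv (by rw [← coe_mul, inv_mul_cancel, coe_one]) h

theorem coe_mul_coe_inv (x : SpecialLinearGroup n R) :
    (x : Matrix n n R) * ((x⁻¹ : SpecialLinearGroup n R) : Matrix n n R) = 1 := by
  rw [← coe_mul, mul_inv_cancel, coe_one]

end Matrix.SpecialLinearGroup

variable [Fintype F]

theorem coe_inv_of_coe_eq_blockUnitri {g : SL6 F} {B C D : Matrix (Fin 2) (Fin 2) F}
    (hg : (g : Matrix (Fin 3 × Fin 2) (Fin 3 × Fin 2) F) = blockUnitri B C D) :
    ((g⁻¹ : SL6 F) : Matrix (Fin 3 × Fin 2) (Fin 3 × Fin 2) F) =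
      blockUnitri (-B) (-C) (B * C - D) :=
  g.coe_inv_eq_of_mul_eq_one (by rw [hg, blockUnitri_mul_blockUnitri_neg])

theorem coe_inv_of_coe_eq_blockDiag3 {g : SL6 F} {A A' : Matrix (Fin 2) (Fin 2) F}
    (hA : A * A' = 1) (hg : (g : Matrix (Fin 3 × Fin 2) (Fin 3 × Fin 2) F) = blockDiag3 A) :
    ((g⁻¹ : SL6 F) : Matrix (Fin 3 × Fin 2) (Fin 3 × Fin 2) F) = blockDiag3 A' :=
  g.coe_inv_eq_of_mul_eq_one (by rw [hg, blockDiag3_mul, hA, ← blockUnitri_zero])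

theorem inv_mem_Hset {g : SL6 F} (hg : g ∈ Hset F) : g⁻¹ ∈ Hset F := by
  obtain ⟨A, hA⟩ := hg
  exact ⟨A⁻¹, coe_inv_of_coe_eq_blockDiag3 A.coe_mul_coe_inv hA⟩

theorem inv_mem_Mset {g : SL6 F} (hg : g ∈ Mset F) : g⁻¹ ∈ Mset F := by
  obtain ⟨B, C, D, hB, hC, hBCD⟩ := hg
  exact ⟨-B, -C, B * C - D, by rw [Matrix.trace_neg, hB, neg_zero],
    by rw [Matrix.trace_neg, hC, neg_zero], coe_inv_of_coe_eq_blockUnitri hBCD⟩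

variable (F) in
def Nsubgroup : Subgroup (SL6 F) where
  carrier := Nset F
  one_mem' := ⟨0, 0, 0, by simp only [zero_smul]; exact blockUnitri_zero.symm⟩
  mul_mem' := by
    rintro x y ⟨b, c, D, hx⟩ ⟨b', c', D', hy⟩
    refine ⟨b + b', c + c', D + D' + (b • 1) * (c' • 1), ?_⟩
    rw [Matrix.SpecialLinearGroup.coe_mul, hx, hy, blockUnitri_mul, add_smul, add_smul]
  inv_mem' := by
    rintro x ⟨b, c, D, hx⟩
    exact ⟨-b, -c, (b • 1) * (c • 1) - D, by
      rw [coe_inv_of_coe_eq_blockUnitri hx, neg_smul, neg_smul]⟩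

theorem conj_mem_Nset_of_coe_eq_blockUnitri {g : SL6 F} {B C D : Matrix (Fin 2) (Fin 2) F}
    (hg : (g : Matrix (Fin 3 × Fin 2) (Fin 3 × Fin 2) F) = blockUnitri B C D)
    {x : SL6 F} (hx : x ∈ Nset F) : g * x * g⁻¹ ∈ Nset F := by
  obtain ⟨b, c, E, hx⟩ := hx
  refine ⟨b, c, D + E + B * (c • 1) + (B * C - D) + (B + b • 1) * -C, ?_⟩
  rw [Matrix.SpecialLinearGroup.coe_mul, Matrix.SpecialLinearGroup.coe_mul,
    coe_inv_of_coe_eq_blockUnitri hg, hg, hx, blockUnitri_mul, blockUnitri_mul,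
    add_neg_cancel_comm, add_neg_cancel_comm]

theorem conj_mem_Nset_of_coe_eq_blockDiag3 {g : SL6 F} {A A' : Matrix (Fin 2) (Fin 2) F}
    (hA : A * A' = 1) (hg : (g : Matrix (Fin 3 × Fin 2) (Fin 3 × Fin 2) F) = blockDiag3 A)
    {x : SL6 F} (hx : x ∈ Nset F) : g * x * g⁻¹ ∈ Nset F := by
  obtain ⟨b, c, D, hx⟩ := hx
  have hscalar (a : F) : A * (a • 1) * A' = a • 1 := by
    rw [mul_smul_comm, mul_one, smul_mul_assoc, hA]
  refine ⟨b, c, A * D * A', ?_⟩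
  rw [Matrix.SpecialLinearGroup.coe_mul, Matrix.SpecialLinearGroup.coe_mul,
    coe_inv_of_coe_eq_blockDiag3 hA hg, hg, hx, blockDiag3_mul_blockUnitri_mul_blockDiag3 hA,
    hscalar, hscalar]

theorem conj_mem_Nset_of_mem_Hset {g : SL6 F} (hg : g ∈ Hset F)
    {x : SL6 F} (hx : x ∈ Nset F) : g * x * g⁻¹ ∈ Nset F := by
  obtain ⟨A, hA⟩ := hg
  exact conj_mem_Nset_of_coe_eq_blockDiag3 A.coe_mul_coe_inv hA hx

theorem conj_mem_Nset_of_mem_Mset {g : SL6 F} (hg : g ∈ Mset F)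
    {x : SL6 F} (hx : x ∈ Nset F) : g * x * g⁻¹ ∈ Nset F := by
  obtain ⟨B, C, D, -, -, hBCD⟩ := hg
  exact conj_mem_Nset_of_coe_eq_blockUnitri hBCD hx

theorem conj_mem_Nset_of_mem_Gsub {g : SL6 F} (hg : g ∈ Gsub F)
    {x : SL6 F} (hx : x ∈ Nset F) : g * x * g⁻¹ ∈ Nset F := by
  have hgen {g : SL6 F} (hg : g ∈ Hset F ∪ Mset F) :
      ∀ x ∈ Nset F, g * x * g⁻¹ ∈ Nset F :=
    hg.elim (fun hH _ => conj_mem_Nset_of_mem_Hset hH) (fun hM _ => conj_mem_Nset_of_mem_Mset hM)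
  induction hg using Subgroup.closure_induction'' generalizing x with
  | mem g hg => exact hgen hg x hx
  | inv_mem g hg => exact hgen (hg.imp inv_mem_Hset inv_mem_Mset) x hx
  | one => simpa using hx
  | mul g h _ _ hg hh => simpa only [_root_.mul_inv_rev, mul_assoc] using hg (hh hx)

end

theorem Nset_normal_in_Gsub_general
    (F : Type*) [Field F] [Fintype F] :
    ((Subgroup.closure (Nset F) : Set (SL6 F)) = Nset F) ∧
    ∀ g ∈ Gsub F, ∀ x ∈ Nset F, g * x * g⁻¹ ∈ Nset F :=
  ⟨congrArg SetLike.coe (Nsubgroup F).closure_eq,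
    fun _ hg _ hx => conj_mem_Nset_of_mem_Gsub hg hx⟩

/-- **Lemma SL6 (3).** `N` is a normal subgroup of `G`: the set `N` is a subgroup
(it coincides with the subgroup it generates) and it is normalized by every
element of `G`. -/
theorem Nset_normal_in_Gsub
    (F : Type*) [Field F] [Fintype F] (hF : Fintype.card F = 4) :
    ((Subgroup.closure (Nset F) : Set (SL6 F)) = Nset F) ∧
    ∀ g ∈ Gsub F, ∀ x ∈ Nset F, g * x * g⁻¹ ∈ Nset F :=
  Nset_normal_in_Gsub_general F
end
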